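/- Let F be a field, A ∈ F^n⊗F^m a tensor, and let U ⊆ F^n⊗F^m be a subspace spanned by linearly independent pure tensors u_1⊗v_1,…,u_s⊗v_s (u_k ∈ F^n, v_k ∈ F^m). Define Â = A⊗e_{s+1} + Σ_{k=1}^s u_k⊗v_k⊗e_k ∈ F^n⊗F^m⊗F^{s+1}. Then rank(A,U) + s = rank(Â), where rank(A,U) = min{rank(B) : B ∈ A+U} and rank denotes tensor rank. -/
import Mathlib


open TensorProduct

/-- The tensor rank of a second-order tensor `T ∈ Fⁿ ⊗ Fᵐ`: the smallest number of
pure tensors `x ⊗ y` summing to `T`. -/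
noncomputable def tensorRank2 {F : Type*} [Field F] {n m : ℕ}
    (T : (Fin n → F) ⊗[F] (Fin m → F)) : ℕ :=
  sInf {r : ℕ | ∃ (x : Fin r → Fin n → F) (y : Fin r → Fin m → F),
    T = ∑ i : Fin r, x i ⊗ₜ[F] y i}

/-- The tensor rank of a third-order tensor `T ∈ Fⁿ ⊗ Fᵐ ⊗ Fᵖ`: the smallest number of
pure tensors `x ⊗ y ⊗ z` summing to `T`. -/
noncomputable def tensorRank3 {F : Type*} [Field F] {n m p : ℕ}
    (T : ((Fin n → F) ⊗[F] (Fin m → F)) ⊗[F] (Fin p → F)) : ℕ :=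
  sInf {r : ℕ | ∃ (x : Fin r → Fin n → F) (y : Fin r → Fin m → F) (z : Fin r → Fin p → F),
    T = ∑ i : Fin r, (x i ⊗ₜ[F] y i) ⊗ₜ[F] z i}

/-- `rank(A, U) = min { rank B | B ∈ A + U }`. -/
noncomputable def rankAU {F : Type*} [Field F] {n m : ℕ}
    (A : (Fin n → F) ⊗[F] (Fin m → F))
    (U : Submodule F ((Fin n → F) ⊗[F] (Fin m → F))) : ℕ :=
  sInf {r : ℕ | ∃ u ∈ U, tensorRank2 (A + u) = r}


set_option synthInstance.maxHeartbeats 1000000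
set_option maxHeartbeats 1000000

section aux
variable {F : Type*} [Field F] {n m p : ℕ}

lemma exists_decomp2 (T : (Fin n → F) ⊗[F] (Fin m → F)) :
    ∃ (r : ℕ) (x : Fin r → Fin n → F) (y : Fin r → Fin m → F),
      T = ∑ i : Fin r, x i ⊗ₜ[F] y i := by
  induction T using TensorProduct.induction_on with
  | zero => exact ⟨0, Fin.elim0, Fin.elim0, by simp⟩
  | tmul a b => exact ⟨1, fun _ => a, fun _ => b, by simp⟩
  | add T1 T2 h1 h2 =>
    obtain ⟨r1, x1, y1, rfl⟩ := h1
    obtain ⟨r2, x2, y2, rfl⟩ := h2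
    refine ⟨r1 + r2, Fin.append x1 x2, Fin.append y1 y2, ?_⟩
    rw [Fin.sum_univ_add]
    simp [Fin.append_left, Fin.append_right]

lemma rank2_le {r : ℕ} {T : (Fin n → F) ⊗[F] (Fin m → F)}
    (x : Fin r → Fin n → F) (y : Fin r → Fin m → F)
    (h : T = ∑ i : Fin r, x i ⊗ₜ[F] y i) : tensorRank2 T ≤ r :=
  Nat.sInf_le ⟨x, y, h⟩

lemma rank2_spec (T : (Fin n → F) ⊗[F] (Fin m → F)) :
    ∃ (x : Fin (tensorRank2 T) → Fin n → F) (y : Fin (tensorRank2 T) → Fin m → F),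
      T = ∑ i, x i ⊗ₜ[F] y i := by
  have hne : {r : ℕ | ∃ (x : Fin r → Fin n → F) (y : Fin r → Fin m → F),
      T = ∑ i : Fin r, x i ⊗ₜ[F] y i}.Nonempty := by
    obtain ⟨r, x, y, h⟩ := exists_decomp2 T
    exact ⟨r, x, y, h⟩
  exact Nat.sInf_mem hne

lemma rank3_le {r : ℕ} {T : ((Fin n → F) ⊗[F] (Fin m → F)) ⊗[F] (Fin p → F)}
    (x : Fin r → Fin n → F) (y : Fin r → Fin m → F) (z : Fin r → Fin p → F)
    (h : T = ∑ i : Fin r, (x i ⊗ₜ[F] y i) ⊗ₜ[F] z i) : tensorRank3 T ≤ r :=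
  Nat.sInf_le ⟨x, y, z, h⟩

lemma exists_decomp3 (T : ((Fin n → F) ⊗[F] (Fin m → F)) ⊗[F] (Fin p → F)) :
    ∃ (r : ℕ) (x : Fin r → Fin n → F) (y : Fin r → Fin m → F) (z : Fin r → Fin p → F),
      T = ∑ i : Fin r, (x i ⊗ₜ[F] y i) ⊗ₜ[F] z i := by
  induction T using TensorProduct.induction_on with
  | zero => exact ⟨0, Fin.elim0, Fin.elim0, Fin.elim0, by simp⟩
  | tmul a b =>
    obtain ⟨r, x, y, rfl⟩ := exists_decomp2 a
    exact ⟨r, x, y, fun _ => b, by rw [sum_tmul]⟩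
  | add T1 T2 h1 h2 =>
    obtain ⟨r1, x1, y1, z1, rfl⟩ := h1
    obtain ⟨r2, x2, y2, z2, rfl⟩ := h2
    refine ⟨r1 + r2, Fin.append x1 x2, Fin.append y1 y2, Fin.append z1 z2, ?_⟩
    rw [Fin.sum_univ_add]
    simp [Fin.append_left, Fin.append_right]

lemma rank3_spec (T : ((Fin n → F) ⊗[F] (Fin m → F)) ⊗[F] (Fin p → F)) :
    ∃ (x : Fin (tensorRank3 T) → Fin n → F) (y : Fin (tensorRank3 T) → Fin m → F)
      (z : Fin (tensorRank3 T) → Fin p → F),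
      T = ∑ i, (x i ⊗ₜ[F] y i) ⊗ₜ[F] z i := by
  have hne : {r : ℕ | ∃ (x : Fin r → Fin n → F) (y : Fin r → Fin m → F)
      (z : Fin r → Fin p → F), T = ∑ i : Fin r, (x i ⊗ₜ[F] y i) ⊗ₜ[F] z i}.Nonempty := by
    obtain ⟨r, x, y, z, h⟩ := exists_decomp3 T
    exact ⟨r, x, y, z, h⟩
  exact Nat.sInf_mem hne

lemma rank3_le_card {ι : Type*} [DecidableEq ι] (fs : Finset ι)
    (x : ι → Fin n → F) (y : ι → Fin m → F) (z : ι → Fin p → F)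
    {T : ((Fin n → F) ⊗[F] (Fin m → F)) ⊗[F] (Fin p → F)}
    (h : T = ∑ i ∈ fs, (x i ⊗ₜ[F] y i) ⊗ₜ[F] z i) : tensorRank3 T ≤ fs.card := by
  refine rank3_le (fun i => x (fs.equivFin.symm i)) (fun i => y (fs.equivFin.symm i))
    (fun i => z (fs.equivFin.symm i)) ?_
  rw [h, ← Finset.sum_attach fs fun i => (x i ⊗ₜ[F] y i) ⊗ₜ[F] z i, ← Finset.univ_eq_attach]
  exact (Equiv.sum_comp fs.equivFin.symm fun a => (x a.1 ⊗ₜ[F] y a.1) ⊗ₜ[F] z a.1).symm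

noncomputable def Ej (F : Type*) [Field F] (n m : ℕ) {p : ℕ} (j : Fin p) :
    ((Fin n → F) ⊗[F] (Fin m → F)) ⊗[F] (Fin p → F) →ₗ[F] (Fin n → F) ⊗[F] (Fin m → F) :=
  (TensorProduct.rid F _).toLinearMap ∘ₗ LinearMap.lTensor _ (LinearMap.proj j)

lemma Ej_tmul (j : Fin p) (t : (Fin n → F) ⊗[F] (Fin m → F)) (w : Fin p → F) :
    Ej F n m j (t ⊗ₜ[F] w) = w j • t := by
  simp [Ej]

lemma Ej_slices (j : Fin p) (T : Fin p → (Fin n → F) ⊗[F] (Fin m → F)) :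
    Ej F n m j (∑ k, T k ⊗ₜ[F] (Pi.single k 1 : Fin p → F)) = T j := by
  rw [_root_.map_sum]
  simp only [Ej_tmul, Pi.single_apply]
  simp [ite_smul]

lemma rank2_Ej_le (j : Fin p) (T : ((Fin n → F) ⊗[F] (Fin m → F)) ⊗[F] (Fin p → F)) :
    tensorRank2 (Ej F n m j T) ≤ tensorRank3 T := by
  obtain ⟨x, y, z, h⟩ := rank3_spec T
  have : Ej F n m j T = ∑ i, (z i j • x i) ⊗ₜ[F] y i := by
    conv_lhs => rw [h]
    rw [_root_.map_sum]
    simp only [Ej_tmul, smul_tmul']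
  exact rank2_le _ _ this

/-- The substitution lemma. -/
lemma substitution (T : Fin (p + 1) → (Fin n → F) ⊗[F] (Fin m → F)) (j : Fin (p + 1))
    (hj : T j ≠ 0) :
    ∃ c : Fin p → F,
      1 + tensorRank3 (∑ k : Fin p,
          (T (j.succAbove k) + c k • T j) ⊗ₜ[F] (Pi.single k 1 : Fin p → F))
        ≤ tensorRank3 (∑ k : Fin (p + 1), T k ⊗ₜ[F] (Pi.single k 1 : Fin (p + 1) → F)) := by
  set S := ∑ k : Fin (p + 1), T k ⊗ₜ[F] (Pi.single k 1 : Fin (p + 1) → F) with hS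
  obtain ⟨x, y, z, hdec⟩ := rank3_spec S
  have hslice : T j = ∑ i, z i j • (x i ⊗ₜ[F] y i) := by
    have h1 : Ej F n m j S = T j := Ej_slices j T
    have h2 : Ej F n m j S = ∑ i, z i j • (x i ⊗ₜ[F] y i) := by
      conv_lhs => rw [hdec]
      rw [_root_.map_sum]
      simp only [Ej_tmul]
    rw [← h1, h2]
  have hex : ∃ i0, z i0 j ≠ 0 := by
    by_contra hcon
    push_neg at hcon
    apply hj
    rw [hslice]
    simp [hcon]
  obtain ⟨i0, hi0⟩ := hex
  set d : Fin p → F := fun k => z i0 (j.succAbove k) / z i0 j with hd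
  refine ⟨fun k => -d k, ?_⟩
  set π : (Fin (p + 1) → F) →ₗ[F] (Fin p → F) :=
    LinearMap.pi (fun k => LinearMap.proj (j.succAbove k) - d k • LinearMap.proj j) with hπ
  have hπ_apply : ∀ (w : Fin (p + 1) → F) (k : Fin p), π w k = w (j.succAbove k) - d k * w j := by
    intro w k
    simp [hπ, smul_eq_mul]
  set P := LinearMap.lTensor ((Fin n → F) ⊗[F] (Fin m → F)) π with hP
  have hsingle : ∀ k : Fin p,
      π (Pi.single (j.succAbove k) 1 : Fin (p + 1) → F) = (Pi.single k 1 : Fin p → F) := by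
    intro k
    funext k'
    rw [hπ_apply]
    have hne : ¬ (j = j.succAbove k) := (Fin.succAbove_ne j k).symm
    simp [Pi.single_apply, Fin.succAbove_right_injective.eq_iff, hne]
  have h_ej : π (Pi.single j 1 : Fin (p + 1) → F) = fun k => -d k := by
    funext k
    rw [hπ_apply]
    simp [Pi.single_apply, Fin.succAbove_ne j k]
  have hz0 : π (z i0) = 0 := by
    funext k
    rw [hπ_apply]
    simp only [hd, Pi.zero_apply]
    rw [div_mul_cancel₀ _ hi0, sub_self]
  have hPS : P S = ∑ k : Fin p,
      (T (j.succAbove k) + (-d k) • T j) ⊗ₜ[F] (Pi.single k 1 : Fin p → F) := by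
    conv_lhs => rw [hS]
    rw [hP, _root_.map_sum]
    simp only [LinearMap.lTensor_tmul]
    rw [Fin.sum_univ_succAbove (fun k => T k ⊗ₜ[F] π (Pi.single k 1 : Fin (p + 1) → F)) j]
    simp only [hsingle, h_ej]
    have hfun : (fun k => -d k : Fin p → F) = ∑ k, (-d k) • (Pi.single k 1 : Fin p → F) := by
      funext k'
      simp [Pi.single_apply, Finset.sum_ite_eq]
    rw [hfun, tmul_sum]
    simp only [tmul_smul, add_tmul, smul_tmul']
    rw [Finset.sum_add_distrib, add_comm]
  have hPdec : P S = ∑ i ∈ Finset.univ.erase i0, (x i ⊗ₜ[F] y i) ⊗ₜ[F] π (z i) := by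
    conv_lhs => rw [hdec]
    rw [hP, _root_.map_sum]
    simp only [LinearMap.lTensor_tmul]
    exact (Finset.sum_erase _ (by rw [hz0, tmul_zero])).symm
  have hle : tensorRank3 (∑ k : Fin p,
      (T (j.succAbove k) + (-d k) • T j) ⊗ₜ[F] (Pi.single k 1 : Fin p → F))
      ≤ (Finset.univ.erase i0).card := by
    apply rank3_le_card _ x y (fun i => π (z i))
    rw [← hPdec, hPS]
  have hcard : (Finset.univ.erase i0).card = tensorRank3 S - 1 := by
    rw [Finset.card_erase_of_mem (Finset.mem_univ i0), Finset.card_univ, Fintype.card_fin]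
  have hpos : 1 ≤ tensorRank3 S := i0.pos
  show 1 + tensorRank3 (∑ k : Fin p,
      (T (j.succAbove k) + (-d k) • T j) ⊗ₜ[F] (Pi.single k 1 : Fin p → F)) ≤ tensorRank3 S
  omega

lemma lower_bound : ∀ (s : ℕ) (S : Fin s → (Fin n → F) ⊗[F] (Fin m → F)),
    LinearIndependent F S → ∀ B : (Fin n → F) ⊗[F] (Fin m → F),
    s + sInf {r : ℕ | ∃ w ∈ Submodule.span F (Set.range S), tensorRank2 (B + w) = r}
      ≤ tensorRank3 (B ⊗ₜ[F] (Pi.single (Fin.last s) 1 : Fin (s + 1) → F)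
          + ∑ k : Fin s, S k ⊗ₜ[F] (Pi.single (Fin.castSucc k) 1 : Fin (s + 1) → F)) := by
  intro s
  induction s with
  | zero =>
    intro S hS B
    have hset : {r : ℕ | ∃ w ∈ Submodule.span F (Set.range S), tensorRank2 (B + w) = r}
        = {tensorRank2 B} := by
      ext r
      constructor
      · rintro ⟨w, hw, rfl⟩
        rw [Set.range_eq_empty, Submodule.span_empty, Submodule.mem_bot] at hw
        subst hw
        simp
      · rintro rfl
        exact ⟨0, Submodule.zero_mem _, by rw [add_zero]⟩
    rw [hset, csInf_singleton, Finset.univ_eq_empty, Finset.sum_empty, add_zero, zero_add]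
    have h := rank2_Ej_le (Fin.last 0) (B ⊗ₜ[F] (Pi.single (Fin.last 0) 1 : Fin 1 → F))
    rwa [Ej_tmul, Pi.single_eq_same, one_smul] at h
  | succ s ih =>
    intro S hS B
    set T : Fin (s + 2) → (Fin n → F) ⊗[F] (Fin m → F) := Fin.snoc S B with hT
    set j : Fin (s + 2) := Fin.castSucc (Fin.last s) with hj
    have hTj : T j = S (Fin.last s) := by
      rw [hT, hj, Fin.snoc_castSucc]
    have hgoal : B ⊗ₜ[F] (Pi.single (Fin.last (s + 1)) 1 : Fin (s + 2) → F)
        + ∑ k : Fin (s + 1), S k ⊗ₜ[F] (Pi.single (Fin.castSucc k) 1 : Fin (s + 2) → F)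
        = ∑ k : Fin (s + 1 + 1), T k ⊗ₜ[F] (Pi.single k 1 : Fin (s + 2) → F) := by
      rw [Fin.sum_univ_castSucc
        (fun k : Fin (s + 1 + 1) => T k ⊗ₜ[F] (Pi.single k 1 : Fin (s + 2) → F))]
      simp only [hT, Fin.snoc_castSucc, Fin.snoc_last]
      exact add_comm _ _
    obtain ⟨c, hc⟩ := substitution T j (by rw [hTj]; exact hS.ne_zero (Fin.last s))
    set S' : Fin s → (Fin n → F) ⊗[F] (Fin m → F) :=
      fun k => S (Fin.castSucc k) + c (Fin.castSucc k) • S (Fin.last s) with hS'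
    set B' := B + c (Fin.last s) • S (Fin.last s) with hB'
    have hι1 : ∀ k : Fin s, j.succAbove (Fin.castSucc k) = Fin.castSucc (Fin.castSucc k) := by
      intro k
      refine Fin.succAbove_of_castSucc_lt _ _ ?_
      rw [hj]
      simp [Fin.lt_def, Fin.is_lt]
    have hι2 : j.succAbove (Fin.last s) = Fin.last (s + 1) := by
      rw [Fin.succAbove_of_le_castSucc _ _ (le_of_eq hj), Fin.succ_last]
    have hT' : ∑ k : Fin (s + 1),
        (T (j.succAbove k) + c k • T j) ⊗ₜ[F] (Pi.single k 1 : Fin (s + 1) → F)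
        = B' ⊗ₜ[F] (Pi.single (Fin.last s) 1 : Fin (s + 1) → F)
          + ∑ k : Fin s, S' k ⊗ₜ[F] (Pi.single (Fin.castSucc k) 1 : Fin (s + 1) → F) := by
      rw [Fin.sum_univ_castSucc (fun k : Fin (s + 1) =>
        (T (j.succAbove k) + c k • T j) ⊗ₜ[F] (Pi.single k 1 : Fin (s + 1) → F))]
      simp only [hι1, hι2, hTj]
      simp only [hT, Fin.snoc_castSucc, Fin.snoc_last]
      simp only [hS', hB']
      exact add_comm _ _
    have hS'li : LinearIndependent F S' := by
      rw [Fintype.linearIndependent_iff]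
      intro g hg
      have hGsum : ∑ k : Fin (s + 1),
          (Fin.snoc g (∑ k : Fin s, g k * c (Fin.castSucc k)) : Fin (s + 1) → F) k • S k
          = 0 := by
        rw [Fin.sum_univ_castSucc (fun k : Fin (s + 1) =>
          (Fin.snoc g (∑ k : Fin s, g k * c (Fin.castSucc k)) : Fin (s + 1) → F) k • S k)]
        simp only [Fin.snoc_castSucc, Fin.snoc_last]
        rw [← hg]
        simp only [hS', smul_add, Finset.sum_add_distrib, Finset.sum_smul, smul_smul]
      have hG := (Fintype.linearIndependent_iff.mp hS) _ hGsum
      intro i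
      have := hG (Fin.castSucc i)
      rwa [Fin.snoc_castSucc] at this
    have hspan : Submodule.span F (Set.range S') ≤ Submodule.span F (Set.range S) := by
      rw [Submodule.span_le]
      rintro _ ⟨k, rfl⟩
      refine Submodule.add_mem _ (Submodule.subset_span ⟨_, rfl⟩)
        (Submodule.smul_mem _ _ (Submodule.subset_span ⟨_, rfl⟩))
    have hinf : sInf {r : ℕ | ∃ w ∈ Submodule.span F (Set.range S), tensorRank2 (B + w) = r}
        ≤ sInf {r : ℕ | ∃ w ∈ Submodule.span F (Set.range S'), tensorRank2 (B' + w) = r} := by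
      have hne : {r : ℕ | ∃ w ∈ Submodule.span F (Set.range S'),
          tensorRank2 (B' + w) = r}.Nonempty :=
        ⟨_, 0, Submodule.zero_mem _, by rw [add_zero]⟩
      obtain ⟨w', hw', hw'eq⟩ := Nat.sInf_mem hne
      refine Nat.sInf_le ⟨c (Fin.last s) • S (Fin.last s) + w', ?_, ?_⟩
      · exact Submodule.add_mem _
          (Submodule.smul_mem _ _ (Submodule.subset_span ⟨_, rfl⟩)) (hspan hw')
      · rw [← hw'eq, hB', add_assoc]
    have hih := ih S' hS'li B'
    rw [hT'] at hc
    rw [hgoal]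
    omega

end aux

/-- if the pure tensors `u_k ⊗ v_k` are linearly independent and span `U`, then
`rank(A,U) + s = rank(Â)`. -/
theorem rankAU_add_eq_tensorRank_hat {F : Type*} [Field F] {n m s : ℕ}
    (A : (Fin n → F) ⊗[F] (Fin m → F))
    (u : Fin s → Fin n → F) (v : Fin s → Fin m → F)
    (hli : LinearIndependent F fun k : Fin s => u k ⊗ₜ[F] v k)
    (U : Submodule F ((Fin n → F) ⊗[F] (Fin m → F)))
    (hU : U = Submodule.span F (Set.range fun k : Fin s => u k ⊗ₜ[F] v k)) :
    rankAU A U + s =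
      tensorRank3
        (A ⊗ₜ[F] (Pi.single (Fin.last s) 1 : Fin (s + 1) → F)
          + ∑ k : Fin s, (u k ⊗ₜ[F] v k) ⊗ₜ[F]
              (Pi.single (Fin.castSucc k) 1 : Fin (s + 1) → F)) := by
  subst hU
  have hrank : rankAU A (Submodule.span F (Set.range fun k : Fin s => u k ⊗ₜ[F] v k)) =
      sInf {r : ℕ | ∃ w ∈ Submodule.span F (Set.range fun k : Fin s => u k ⊗ₜ[F] v k),
        tensorRank2 (A + w) = r} := rfl
  have hlow : s + sInf {r : ℕ | ∃ w ∈ Submodule.span F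
        (Set.range fun k : Fin s => u k ⊗ₜ[F] v k), tensorRank2 (A + w) = r}
      ≤ tensorRank3 (A ⊗ₜ[F] (Pi.single (Fin.last s) 1 : Fin (s + 1) → F)
          + ∑ k : Fin s, (u k ⊗ₜ[F] v k) ⊗ₜ[F]
              (Pi.single (Fin.castSucc k) 1 : Fin (s + 1) → F)) :=
    lower_bound s (fun k : Fin s => u k ⊗ₜ[F] v k) hli A
  have hne : {r : ℕ | ∃ w ∈ Submodule.span F (Set.range fun k : Fin s => u k ⊗ₜ[F] v k),
      tensorRank2 (A + w) = r}.Nonempty :=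
    ⟨_, 0, Submodule.zero_mem _, by rw [add_zero]⟩
  obtain ⟨w, hw, hweq⟩ := Nat.sInf_mem hne
  obtain ⟨c, hcw⟩ := (Submodule.mem_span_range_iff_exists_fun F).mp hw
  obtain ⟨x, y, hxy⟩ := rank2_spec (A + w)
  have hub : tensorRank3 (A ⊗ₜ[F] (Pi.single (Fin.last s) 1 : Fin (s + 1) → F)
          + ∑ k : Fin s, (u k ⊗ₜ[F] v k) ⊗ₜ[F]
              (Pi.single (Fin.castSucc k) 1 : Fin (s + 1) → F))
      ≤ tensorRank2 (A + w) + s := by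
    refine rank3_le (Fin.append x u) (Fin.append y v)
      (Fin.append (fun _ => (Pi.single (Fin.last s) 1 : Fin (s + 1) → F))
        (fun k => (Pi.single (Fin.castSucc k) 1 : Fin (s + 1) → F)
          - c k • (Pi.single (Fin.last s) 1 : Fin (s + 1) → F))) ?_
    rw [Fin.sum_univ_add]
    simp only [Fin.append_left, Fin.append_right]
    rw [← sum_tmul, ← hxy, ← hcw]
    simp only [add_tmul, sum_tmul, tmul_sub, smul_tmul, tmul_smul, Finset.sum_sub_distrib]
    rw [add_assoc, ← Finset.sum_add_distrib]
    simp
  omega
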